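/- Fix n : ℕ and λ with 0 < λ < 1. For all neighboring inputs x, x' : Fin n → Bool (i.e. d(x,x') = 1) and every output y : Fin n → Bool, the likelihood ratio of binary randomized response, taken in ℝ≥0∞, satisfies (RR_λ(x))(y) / (RR_λ(x'))(y) = ENNReal.ofReal (λ / (1 − λ)) ∨ (RR_λ(x))(y) / (RR_λ(x'))(y) = ENNReal.ofReal ((1 − λ) / λ). Consequently, every neighboring likelihood ratio of RR_λ is realized by one of the representative triples (rep_i, rep_{i±1}, 𝟘) with rep_i j = (j < i), so these triples form a privacy set for RR_λ. -/

import Mathlib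

/-- `n` independent Bernoulli(`lam`) coin flips, as an `n`-fold monadic bind in the
`PMF` monad. -/
noncomputable def coins (lam : ℝ) (h1 : lam ≤ 1) : (n : ℕ) → PMF (Fin n → Bool)
  | 0 => PMF.pure fun _ => false
  | n + 1 =>
      (PMF.bernoulli (Real.toNNReal lam) (Real.toNNReal_le_one.mpr h1)).bind fun b =>
        (coins lam h1 n).bind fun rest => PMF.pure (Fin.cons b rest)

/-- Binary randomized response with flip probability `lam`. -/
noncomputable def RR (n : ℕ) (lam : ℝ) (h1 : lam ≤ 1) (x : Fin n → Bool) :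
    PMF (Fin n → Bool) :=
  (coins lam h1 n).map fun θ i => xor (x i) (θ i)

/-- Hamming distance between two Boolean vectors. -/
def hamm {n : ℕ} (x y : Fin n → Bool) : ℕ :=
  (Finset.univ.filter fun i => x i ≠ y i).card

/-- The representative input `rep n i`: `i` ones followed by `n - i` zeros. -/
def rep (n : ℕ) (i : ℕ) : Fin n → Bool := fun j => decide ((j : ℕ) < i)

open scoped ENNReal

lemma coins_apply (lam : ℝ) (h0 : 0 ≤ lam) (h1 : lam ≤ 1) :
    ∀ (n : ℕ) (θ : Fin n → Bool),
      coins lam h1 n θ =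
        ∏ i, (if θ i then ENNReal.ofReal lam else ENNReal.ofReal (1 - lam)) := by
  intro n
  induction n with
  | zero =>
    intro θ
    have : θ = fun _ => false := funext fun i => i.elim0
    simp [coins, this]
  | succ n ih =>
    intro θ
    have hθ : θ = Fin.cons (θ 0) (Fin.tail θ) := (Fin.cons_self_tail θ).symm
    have hsub : (1 : ℝ≥0∞) - ENNReal.ofReal lam = ENNReal.ofReal (1 - lam) := by
      rw [ENNReal.ofReal_sub _ h0, ENNReal.ofReal_one]
    have hlam : ((Real.toNNReal lam : NNReal) : ℝ≥0∞) = ENNReal.ofReal lam := rfl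
    have hsub2 : ((1 - Real.toNNReal lam : NNReal) : ℝ≥0∞) = ENNReal.ofReal (1 - lam) := by
      rw [ENNReal.coe_sub, ENNReal.coe_one, hlam]; exact hsub
    rw [show coins lam h1 (n+1) = (PMF.bernoulli (Real.toNNReal lam)
        (Real.toNNReal_le_one.mpr h1)).bind fun b =>
        (coins lam h1 n).bind fun rest => PMF.pure (Fin.cons b rest) from rfl]
    rw [PMF.bind_apply]
    rw [tsum_eq_single (θ 0) ?side1]
    case side1 =>
      intro b hb
      rw [PMF.bind_apply]
      convert mul_zero _
      rw [show (0 : ℝ≥0∞) = ∑' (_ : Fin n → Bool), 0 by simp]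
      congr 1; funext rest
      rw [PMF.pure_apply, if_neg, mul_zero]
      intro h
      exact hb (by rw [h, Fin.cons_zero])
    rw [PMF.bind_apply]
    rw [tsum_eq_single (Fin.tail θ) ?side2]
    case side2 =>
      intro rest hrest
      rw [PMF.pure_apply, if_neg, mul_zero]
      intro h
      exact hrest (by rw [h, Fin.tail_cons])
    rw [PMF.pure_apply, if_pos hθ, mul_one, ih, PMF.bernoulli_apply]
    rw [Fin.prod_univ_succ]
    congr 1
    cases θ 0 <;> simp [hsub, hsub2, hlam]

lemma hamm_le {n : ℕ} (x y : Fin n → Bool) : hamm x y ≤ n := by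
  simpa [hamm] using Finset.card_filter_le Finset.univ (fun i => x i ≠ y i)

lemma RR_apply (n : ℕ) (lam : ℝ) (h0 : 0 ≤ lam) (h1 : lam ≤ 1) (x y : Fin n → Bool) :
    RR n lam h1 x y =
      ENNReal.ofReal lam ^ hamm x y * ENNReal.ofReal (1 - lam) ^ (n - hamm x y) := by
  rw [RR, PMF.map_apply]
  rw [tsum_eq_single (fun i => xor (x i) (y i)) ?side]
  case side =>
    intro θ hθ
    rw [if_neg]
    intro h
    apply hθ
    funext i
    have := congrFun h i
    cases x i <;> cases y i <;> cases hc : θ i <;> simp_all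
  rw [if_pos, coins_apply lam h0 h1]
  · have hcond : ∀ i : Fin n, (xor (x i) (y i) = true) ↔ (x i ≠ y i) := by
      intro i; cases x i <;> cases y i <;> simp
    rw [show (∏ i, (if xor (x i) (y i) then ENNReal.ofReal lam else ENNReal.ofReal (1 - lam)))
        = ∏ i, (if x i ≠ y i then ENNReal.ofReal lam else ENNReal.ofReal (1 - lam)) by
      apply Finset.prod_congr rfl
      intro i _
      simp only [hcond i]]
    rw [Finset.prod_ite, Finset.prod_const, Finset.prod_const]
    have hcard : (Finset.filter (fun i => ¬x i ≠ y i) Finset.univ).card = n - hamm x y := by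
      have := Finset.card_filter_add_card_filter_not
        (s := (Finset.univ : Finset (Fin n))) (p := fun i => x i ≠ y i)
      simp only [Finset.card_univ, Fintype.card_fin] at this
      unfold hamm
      omega
    rw [hcard]
    rfl
  · funext i
    simp [← Bool.xor_assoc]

lemma hamm_rep (n d : ℕ) (hd : d ≤ n) : hamm (rep n d) (fun _ => false) = d := by
  unfold hamm rep
  have h : ∀ m ∈ Finset.range d, m < n := fun m hm =>
    lt_of_lt_of_le (Finset.mem_range.mp hm) hd
  rw [show (Finset.univ.filter fun i : Fin n => decide ((i : ℕ) < d) ≠ false)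
      = (Finset.range d).attachFin h by
    ext j
    simp [Finset.mem_attachFin]]
  rw [Finset.card_attachFin, Finset.card_range]

lemma hamm_succ {n : ℕ} {x x' y : Fin n → Bool} (h : hamm x x' = 1) :
    hamm x y = hamm x' y + 1 ∨ hamm x' y = hamm x y + 1 := by
  obtain ⟨i0, hi0⟩ := Finset.card_eq_one.mp h
  have hmem : ∀ j : Fin n, x j ≠ x' j ↔ j = i0 := by
    intro j
    constructor
    · intro hj
      have : j ∈ Finset.univ.filter fun i => x i ≠ x' i := by simp [hj]
      rw [hi0] at this
      simpa using this
    · intro hj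
      subst hj
      have : j ∈ ({j} : Finset (Fin n)) := Finset.mem_singleton_self j
      rw [← hi0] at this
      simpa using this
  have hne : x i0 ≠ x' i0 := (hmem i0).mpr rfl
  have heq : ∀ j, j ≠ i0 → x j = x' j := by
    intro j hj
    by_contra hc
    exact hj ((hmem j).mp hc)
  by_cases hc : x i0 ≠ y i0
  · left
    have hc' : x' i0 = y i0 := by
      cases hx : x i0 <;> cases hy : y i0 <;> cases hx' : x' i0 <;> simp_all
    unfold hamm
    rw [show (Finset.univ.filter fun i => x i ≠ y i)
        = insert i0 (Finset.univ.filter fun i => x' i ≠ y i) by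
      ext j
      by_cases hj : j = i0
      · subst hj; simp [hc, hc']
      · simp only [Finset.mem_insert, Finset.mem_filter, Finset.mem_univ, true_and]
        rw [heq j hj]
        tauto]
    rw [Finset.card_insert_of_notMem (by simp [hc'])]
  · right
    push_neg at hc
    have hc' : x' i0 ≠ y i0 := by
      cases hx : x i0 <;> cases hy : y i0 <;> cases hx' : x' i0 <;> simp_all
    unfold hamm
    rw [show (Finset.univ.filter fun i => x' i ≠ y i)
        = insert i0 (Finset.univ.filter fun i => x i ≠ y i) by
      ext j
      by_cases hj : j = i0
      · subst hj; simp [hc, hc']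
      · simp only [Finset.mem_insert, Finset.mem_filter, Finset.mem_univ, true_and]
        rw [heq j hj]
        tauto]
    rw [Finset.card_insert_of_notMem (by simp [hc])]

lemma ratio_helper (lam : ℝ) (h0 : 0 < lam) (h1 : lam < 1) (n k : ℕ) (hk : k + 1 ≤ n) :
    (ENNReal.ofReal lam ^ (k+1) * ENNReal.ofReal (1-lam) ^ (n - (k+1))) /
    (ENNReal.ofReal lam ^ k * ENNReal.ofReal (1-lam) ^ (n - k)) =
    ENNReal.ofReal lam / ENNReal.ofReal (1-lam) := by
  set a := ENNReal.ofReal lam with ha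
  set b := ENNReal.ofReal (1-lam) with hb
  have ha0 : a ≠ 0 := by simp [ha, ENNReal.ofReal_eq_zero]; linarith
  have haT : a ≠ ⊤ := ENNReal.ofReal_ne_top
  have hb0 : b ≠ 0 := by simp [hb, ENNReal.ofReal_eq_zero]; linarith
  have hbT : b ≠ ⊤ := ENNReal.ofReal_ne_top
  have hnk : n - k = (n - (k+1)) + 1 := by omega
  rw [hnk]
  set m := n - (k+1)
  have hc0 : a ^ k * b ^ m ≠ 0 := by
    exact mul_ne_zero (pow_ne_zero _ ha0) (pow_ne_zero _ hb0)
  have hcT : a ^ k * b ^ m ≠ ⊤ := by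
    exact ENNReal.mul_ne_top (ENNReal.pow_ne_top haT) (ENNReal.pow_ne_top hbT)
  calc a ^ (k+1) * b ^ m / (a ^ k * b ^ (m+1))
      = a * (a ^ k * b ^ m) / (b * (a ^ k * b ^ m)) := by ring_nf
    _ = a / b := ENNReal.mul_div_mul_right _ _ hc0 hcT

lemma ratio_helper' (lam : ℝ) (h0 : 0 < lam) (h1 : lam < 1) (n k : ℕ) (hk : k + 1 ≤ n) :
    (ENNReal.ofReal lam ^ k * ENNReal.ofReal (1-lam) ^ (n - k)) /
    (ENNReal.ofReal lam ^ (k+1) * ENNReal.ofReal (1-lam) ^ (n - (k+1))) =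
    ENNReal.ofReal (1-lam) / ENNReal.ofReal lam := by
  set a := ENNReal.ofReal lam with ha
  set b := ENNReal.ofReal (1-lam) with hb
  have ha0 : a ≠ 0 := by simp [ha, ENNReal.ofReal_eq_zero]; linarith
  have haT : a ≠ ⊤ := ENNReal.ofReal_ne_top
  have hb0 : b ≠ 0 := by simp [hb, ENNReal.ofReal_eq_zero]; linarith
  have hbT : b ≠ ⊤ := ENNReal.ofReal_ne_top
  have hnk : n - k = (n - (k+1)) + 1 := by omega
  rw [hnk]
  set m := n - (k+1)
  have hc0 : a ^ k * b ^ m ≠ 0 := mul_ne_zero (pow_ne_zero _ ha0) (pow_ne_zero _ hb0)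
  have hcT : a ^ k * b ^ m ≠ ⊤ :=
    ENNReal.mul_ne_top (ENNReal.pow_ne_top haT) (ENNReal.pow_ne_top hbT)
  calc a ^ k * b ^ (m+1) / (a ^ (k+1) * b ^ m)
      = b * (a ^ k * b ^ m) / (a * (a ^ k * b ^ m)) := by ring_nf
    _ = b / a := ENNReal.mul_div_mul_right _ _ hc0 hcT

/-- For neighboring inputs, every likelihood ratio of binary randomized response is
either `λ/(1-λ)` or `(1-λ)/λ`; consequently every neighboring likelihood ratio is
realized by a representative triple `(rep i, rep (i±1), 0ⁿ)`, so these triples form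
a privacy set for `RR_λ`. -/
theorem RR_likelihood_ratio (n : ℕ) (lam : ℝ) (h0 : 0 < lam) (h1 : lam < 1) :
    (∀ x x' y : Fin n → Bool, hamm x x' = 1 →
      RR n lam h1.le x y / RR n lam h1.le x' y = ENNReal.ofReal (lam / (1 - lam)) ∨
      RR n lam h1.le x y / RR n lam h1.le x' y = ENNReal.ofReal ((1 - lam) / lam)) ∧
    (∀ x x' y : Fin n → Bool, hamm x x' = 1 →
      ∃ i i' : ℕ, (i' = i + 1 ∨ i = i' + 1) ∧
        RR n lam h1.le x y / RR n lam h1.le x' y =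
          RR n lam h1.le (rep n i) (fun _ => false) /
            RR n lam h1.le (rep n i') (fun _ => false)) := by
  have key : ∀ x y : Fin n → Bool, RR n lam h1.le x y =
      ENNReal.ofReal lam ^ hamm x y * ENNReal.ofReal (1 - lam) ^ (n - hamm x y) :=
    RR_apply n lam h0.le h1.le
  constructor
  · intro x x' y hxx
    rcases hamm_succ (y := y) hxx with hcase | hcase
    · left
      rw [key, key, hcase, ratio_helper lam h0 h1 n (hamm x' y) (hcase ▸ hamm_le x y)]
      rw [ENNReal.ofReal_div_of_pos (by linarith)]
    · right
      rw [key, key, hcase, ratio_helper' lam h0 h1 n (hamm x y) (hcase ▸ hamm_le x' y)]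
      rw [ENNReal.ofReal_div_of_pos h0]
  · intro x x' y hxx
    refine ⟨hamm x y, hamm x' y, ?_, ?_⟩
    · rcases hamm_succ (y := y) hxx with hcase | hcase
      · right; exact hcase
      · left; exact hcase
    · rw [key, key, key, key, hamm_rep n _ (hamm_le x y), hamm_rep n _ (hamm_le x' y)]
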